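/- Under the RLVR task-selection setup, if the learning rate satisfies η < 1/(4γ²), then for every iteration t ≥ 0 and every step s ∈ [S], it holds surely (for any realization of the training batch) that P_{t+1}(A_{s,τ(s)}) ≥ P_t(A_{s,τ(s)}) − 2ηγ². -/

import Mathlib

open scoped BigOperators RealInnerProductSpace ENNReal

noncomputable section

namespace RLVR

/-- Softmax distribution over a finite vocabulary. -/
def softmax {V : Type*} [Fintype V] (L : V → ℝ) (y : V) : ℝ :=
  Real.exp (L y) / ∑ w, Real.exp (L w)

variable {V : Type*} [Fintype V] [DecidableEq V] [Nonempty V]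
variable {P : Type*} [Fintype P]
variable {J S Bsz : ℕ}

/-- The model logits: `f_θ(x)[v] = Σ_j γ·1[σ_j(x) = v]·⟨h_{s,j}, θ⟩`, where the
positional index `s` records the number of already generated CoT tokens in `x`. -/
def model (γ : ℝ) (σ : Fin J → List V → V)
    (h : Fin S → Fin J → EuclideanSpace ℝ P)
    (θ : EuclideanSpace ℝ P) (s : Fin S) (x : List V) : V → ℝ :=
  fun v => ∑ j : Fin J, (if σ j x = v then γ else 0) * ⟪h s j, θ⟫

/-- The autoregressive policy `π_θ(y | x) = Softmax(f_θ(x))[y]`. -/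
def policy (γ : ℝ) (σ : Fin J → List V → V)
    (h : Fin S → Fin J → EuclideanSpace ℝ P)
    (θ : EuclideanSpace ℝ P) (s : Fin S) (x : List V) (y : V) : ℝ :=
  softmax (model γ σ h θ s x) y

/-- A trajectory: a prompt together with the `S` generated CoT tokens. -/
abbrev Traj (V : Type*) (S : ℕ) := List V × (Fin S → V)

/-- The prefix `x_n`: the prompt followed by the first `n` generated tokens. -/
def pref (ω : Traj V S) (n : ℕ) : List V := ω.1 ++ (List.ofFn ω.2).take n

/-- The full generated string `x_S`. -/
def fullStr (ω : Traj V S) : List V := ω.1 ++ List.ofFn ω.2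

/-- Density of a trajectory under prompt distribution `D` and parameters `θ`. -/
def dens (D : List V → ℝ) (γ : ℝ) (σ : Fin J → List V → V)
    (h : Fin S → Fin J → EuclideanSpace ℝ P) (θ : EuclideanSpace ℝ P)
    (ω : Traj V S) : ℝ :=
  D ω.1 * ∏ s : Fin S, policy γ σ h θ s (pref ω s.val) (ω.2 s)

/-- Probability `P_θ(E)` of an event `E` over trajectories. -/
def Pr (D : List V → ℝ) (γ : ℝ) (σ : Fin J → List V → V)
    (h : Fin S → Fin J → EuclideanSpace ℝ P) (θ : EuclideanSpace ℝ P)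
    (E : Set (Traj V S)) : ℝ :=
  ∑' ω : Traj V S, Set.indicator E (dens D γ σ h θ) ω

/-- Conditional probability `P_θ(E | F)`. -/
def condPr (D : List V → ℝ) (γ : ℝ) (σ : Fin J → List V → V)
    (h : Fin S → Fin J → EuclideanSpace ℝ P) (θ : EuclideanSpace ℝ P)
    (E F : Set (Traj V S)) : ℝ :=
  Pr D γ σ h θ (E ∩ F) / Pr D γ σ h θ F

/-- The event `A_{s,j}` that task `σ_j` is selected at step `s`. -/
def Av (σ : Fin J → List V → V) (s : Fin S) (j : Fin J) : Set (Traj V S) :=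
  {ω | ω.2 s = σ j (pref ω s.val)}

/-- The event that the verifier accepts the final string. -/
def VE (Verif : List V → Bool) : Set (Traj V S) :=
  {ω | Verif (fullStr ω) = true}

/-- The task-advantage ratio `ρ^θ_{s,j} = P_θ(V=1 | A_{s,j}) / P_θ(V=1 | A_{s,j}ᶜ)`,
valued in `ℝ≥0∞` (so that a vanishing denominator yields `∞`, matching the paper's
conventions). -/
def ratio (D : List V → ℝ) (γ : ℝ) (σ : Fin J → List V → V)
    (h : Fin S → Fin J → EuclideanSpace ℝ P) (Verif : List V → Bool)
    (θ : EuclideanSpace ℝ P) (s : Fin S) (j : Fin J) : ℝ≥0∞ :=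
  ENNReal.ofReal (condPr D γ σ h θ (VE Verif) (Av σ s j)) /
    ENNReal.ofReal (condPr D γ σ h θ (VE Verif) ((Av σ s j)ᶜ))

/-- The REINFORCE parameter update
`θ' = θ + (η/B)·Σ_b Σ_s ∇_θ log π_θ(y_s^{(b)} | x_{s−1}^{(b)})` on a batch `bs`. -/
def update (γ : ℝ) (σ : Fin J → List V → V)
    (h : Fin S → Fin J → EuclideanSpace ℝ P) (η : ℝ)
    (θ : EuclideanSpace ℝ P) (bs : Fin Bsz → Traj V S) : EuclideanSpace ℝ P :=
  θ + (η / (Bsz : ℝ)) • ∑ b : Fin Bsz, ∑ s : Fin S,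
    gradient (fun θ' => Real.log (policy γ σ h θ' s (pref (bs b) s.val) ((bs b).2 s))) θ

/-- Density of a single trajectory of the training batch: a draw from `P_θ`
conditioned on the verifier accepting. -/
def condDens (D : List V → ℝ) (γ : ℝ) (σ : Fin J → List V → V)
    (h : Fin S → Fin J → EuclideanSpace ℝ P) (Verif : List V → Bool)
    (θ : EuclideanSpace ℝ P) (ω : Traj V S) : ℝ :=
  Set.indicator (VE Verif) (dens D γ σ h θ) ω / Pr D γ σ h θ (VE Verif)

/-- Expectation, over an i.i.d. batch of `Bsz` positive samples
(drawn from `P_θ(· | V = 1)`), of a function of the batch. -/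
def Ebatch (D : List V → ℝ) (γ : ℝ) (σ : Fin J → List V → V)
    (h : Fin S → Fin J → EuclideanSpace ℝ P) (Verif : List V → Bool)
    (θ : EuclideanSpace ℝ P) (F : (Fin Bsz → Traj V S) → ℝ) : ℝ :=
  ∑' bs : Fin Bsz → Traj V S, (∏ b : Fin Bsz, condDens D γ σ h Verif θ (bs b)) * F bs

/-- The empirical discrepancy
`Q_{s,j} = (1/B)·Σ_b (1[y_s^{(b)} = σ_j(x_{s−1}^{(b)})] − π_θ(σ_j(x_{s−1}^{(b)}) | x_{s−1}^{(b)}))`. -/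
def Q (γ : ℝ) (σ : Fin J → List V → V)
    (h : Fin S → Fin J → EuclideanSpace ℝ P) (θ : EuclideanSpace ℝ P)
    (bs : Fin Bsz → Traj V S) (s : Fin S) (j : Fin J) : ℝ :=
  (1 / (Bsz : ℝ)) * ∑ b : Fin Bsz,
    ((if (bs b).2 s = σ j (pref (bs b) s.val) then (1 : ℝ) else 0)
      - policy γ σ h θ s (pref (bs b) s.val) (σ j (pref (bs b) s.val)))

/-- The first `n` steps of the ground-truth chain of thought started at prompt `x0`:
apply `σ_{τ(1)}, …, σ_{τ(n)}` autoregressively. -/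
def fstarPref (σ : Fin J → List V → V) (τ : Fin S → Fin J) (x0 : List V)
    (n : ℕ) : List V :=
  ((List.finRange S).take n).foldl (fun acc s => acc ++ [σ (τ s) acc]) x0

/-- The target function `f*`: the full ground-truth chain of thought. -/
def fstar (σ : Fin J → List V → V) (τ : Fin S → Fin J) (x0 : List V) : List V :=
  fstarPref σ τ x0 S

/-- `P_θ(f*(x0) | x0)`: the probability of generating exactly the ground-truth
completion from prompt `x0` (chain rule of probability). -/
def targetProb (γ : ℝ) (σ : Fin J → List V → V)
    (h : Fin S → Fin J → EuclideanSpace ℝ P) (τ : Fin S → Fin J)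
    (θ : EuclideanSpace ℝ P) (x0 : List V) : ℝ :=
  ∏ s : Fin S, policy γ σ h θ s (fstarPref σ τ x0 s.val) (σ (τ s) (fstarPref σ τ x0 s.val))

/-- The cross-entropy loss `L(θ) = E_{x0∼D}[log(1/P_θ(f*(x0) | x0))]`. -/
def celoss (D : List V → ℝ) (γ : ℝ) (σ : Fin J → List V → V)
    (h : Fin S → Fin J → EuclideanSpace ℝ P) (τ : Fin S → Fin J)
    (θ : EuclideanSpace ℝ P) : ℝ :=
  ∑' x0 : List V, D x0 * Real.log (1 / targetProb γ σ h τ θ x0)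

/-- The training iterates: `θ^{(0)} = θ0` and
`θ^{(t+1)} = update(θ^{(t)}, batch t)`. -/
def thetaSeq (γ : ℝ) (σ : Fin J → List V → V)
    (h : Fin S → Fin J → EuclideanSpace ℝ P) (η : ℝ) (θ0 : EuclideanSpace ℝ P)
    (ω : ℕ → Fin Bsz → Traj V S) : ℕ → EuclideanSpace ℝ P
  | 0 => θ0
  | t + 1 => update γ σ h η (thetaSeq γ σ h η θ0 ω t) (ω t)

/-- Extension of a finite-horizon family of batches to all times. -/
def extendBatches (T : ℕ) (ωf : Fin T → Fin Bsz → Traj V S) :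
    ℕ → Fin Bsz → Traj V S :=
  fun t => if ht : t < T then ωf ⟨t, ht⟩ else fun _ => ([], fun _ => Classical.arbitrary V)

/-- Density of the whole training run over horizon `T`: at each iteration `t` the
batch is drawn i.i.d. from `P_{θ^{(t)}}(· | V = 1)`. -/
def trainDens (D : List V → ℝ) (γ : ℝ) (σ : Fin J → List V → V)
    (h : Fin S → Fin J → EuclideanSpace ℝ P) (Verif : List V → Bool) (η : ℝ)
    (θ0 : EuclideanSpace ℝ P) (T : ℕ) (ωf : Fin T → Fin Bsz → Traj V S) : ℝ :=
  ∏ t : Fin T, ∏ b : Fin Bsz,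
    condDens D γ σ h Verif (thetaSeq γ σ h η θ0 (extendBatches T ωf) t.val) (ωf t b)

/-- Probability, over the training randomness up to horizon `T`, of an event on the
batches. -/
def PrTrain (D : List V → ℝ) (γ : ℝ) (σ : Fin J → List V → V)
    (h : Fin S → Fin J → EuclideanSpace ℝ P) (Verif : List V → Bool) (η : ℝ)
    (θ0 : EuclideanSpace ℝ P) (T : ℕ)
    (E : Set (Fin T → Fin Bsz → Traj V S)) : ℝ :=
  ∑' ωf : Fin T → Fin Bsz → Traj V S,
    Set.indicator E (trainDens D γ σ h Verif η θ0 T) ωf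

end RLVR

/-! Because the tasks disagree on every input, the logit of `σ_j(x)` at step `s` is
`γ⟨h_{s,j}, θ⟩` and every other logit is `0`. Hence the softmax normaliser, and with it the
probability of choosing `σ_j(x)`, does not depend on the prefix `x`, and marginalising the
autoregressive chain shows that `P_θ(A_{s,j})` is this constant. By orthonormality of the
`h_{s,j}`, one REINFORCE step moves `⟨h_{s,j}, θ⟩` by `ηγ·Q_{s,j}` with `|Q_{s,j}| ≤ 1`, so
every logit moves by at most `ε = ηγ²`. When all logits move by at most `ε`, a softmax
probability is multiplied by at least `e^{-2ε} ≥ 1 - 2ε`, so it drops by at most `2ε`. -/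

lemma sum_prod_autoregressive {V : Type*} [Fintype V] {n : ℕ} (K : Fin n → List V → V → ℝ)
    (c : Fin n → ℝ) (hK : ∀ i x, ∑ v, K i x v = c i) (x₀ : List V) :
    ∑ y : Fin n → V, ∏ i, K i (x₀ ++ (List.ofFn y).take i) (y i) = ∏ i, c i := by
  induction n generalizing x₀ with
  | zero => simp
  | succ n ih =>
    have hcons : ∀ (v : V) (y : Fin n → V),
        ∏ i, K i (x₀ ++ (List.ofFn (Fin.cons v y : Fin (n + 1) → V)).take i)
          ((Fin.cons v y : Fin (n + 1) → V) i)
        = K 0 x₀ v * ∏ i : Fin n, K i.succ ((x₀ ++ [v]) ++ (List.ofFn y).take i) (y i) := by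
      intro v y
      simp [Fin.prod_univ_succ, List.ofFn_succ]
    rw [← (Fin.consEquiv fun _ => V).sum_comp, Fintype.sum_prod_type]
    calc _ = ∑ v, K 0 x₀ v * ∏ i : Fin n, c i.succ := Finset.sum_congr rfl fun v _ => by
          rw [← ih (fun i => K i.succ) (fun i => c i.succ) (fun i => hK i.succ) (x₀ ++ [v]),
            Finset.mul_sum]
          exact Finset.sum_congr rfl fun y _ => hcons v y
      _ = ∏ i, c i := by rw [← Finset.sum_mul, hK, Fin.prod_univ_succ]

lemma tsum_mul_of_sum_fiber_eq {α β : Type*} [Fintype β] {D : α → ℝ} {g : α × β → ℝ} {p : ℝ}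
    (hD0 : ∀ a, 0 ≤ D a) (hD1 : ∑' a, D a = 1) (hg0 : ∀ ω, 0 ≤ g ω)
    (hg : ∀ a, ∑ b, g (a, b) = p) :
    ∑' ω : α × β, D ω.1 * g ω = p := by
  have hD : Summable D := by
    by_contra hD
    rw [tsum_eq_zero_of_not_summable hD] at hD1
    exact zero_ne_one hD1
  have hfiber : ∀ a, ∑' b, D a * g (a, b) = D a * p := fun a => by
    rw [tsum_fintype, ← Finset.mul_sum, hg]
  have hsum : Summable fun ω : α × β => D ω.1 * g ω :=
    (summable_prod_of_nonneg fun ω => mul_nonneg (hD0 _) (hg0 _)).2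
      ⟨fun _ => Summable.of_finite, by simpa only [hfiber] using hD.mul_right p⟩
  rw [hsum.tsum_prod' fun _ => Summable.of_finite]
  simp only [hfiber, tsum_mul_right, hD1, one_mul]

namespace RLVR

section Softmax

variable {V : Type*} [Fintype V] [Nonempty V]

lemma sum_exp_pos (L : V → ℝ) : 0 < ∑ w, Real.exp (L w) :=
  Finset.sum_pos (fun _ _ => Real.exp_pos _) Finset.univ_nonempty

lemma softmax_nonneg (L : V → ℝ) (y : V) : 0 ≤ softmax L y :=
  div_nonneg (Real.exp_pos _).le (sum_exp_pos L).le

lemma softmax_le_one (L : V → ℝ) (y : V) : softmax L y ≤ 1 := by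
  rw [softmax, div_le_one (sum_exp_pos L)]
  exact Finset.single_le_sum (fun w _ => (Real.exp_pos _).le) (Finset.mem_univ y)

lemma sum_softmax (L : V → ℝ) : ∑ y, softmax L y = 1 := by
  simp only [softmax, ← Finset.sum_div]
  exact div_self (sum_exp_pos L).ne'

lemma softmax_sub_two_mul_le {L L' : V → ℝ} {ε : ℝ} (hL : ∀ w, |L' w - L w| ≤ ε) (y : V) :
    softmax L y - 2 * ε ≤ softmax L' y := by
  have hε : 0 ≤ ε := (abs_nonneg _).trans (hL y)
  have hnum : Real.exp (-ε) * Real.exp (L y) ≤ Real.exp (L' y) := by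
    rw [← Real.exp_add, Real.exp_le_exp]
    linarith [neg_abs_le (L' y - L y), hL y]
  have hden : ∑ w, Real.exp (L' w) ≤ Real.exp ε * ∑ w, Real.exp (L w) := by
    rw [Finset.mul_sum]
    refine Finset.sum_le_sum fun w _ => ?_
    rw [← Real.exp_add, Real.exp_le_exp]
    linarith [le_abs_self (L' w - L w), hL w]
  have hratio : Real.exp (-(2 * ε)) * softmax L y ≤ softmax L' y := by
    calc Real.exp (-(2 * ε)) * softmax L y
        = Real.exp (-ε) * Real.exp (L y) / (Real.exp ε * ∑ w, Real.exp (L w)) := by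
          rw [softmax, show -(2 * ε) = -ε + -ε by ring, Real.exp_add, Real.exp_neg ε]
          field_simp
      _ ≤ softmax L' y :=
          div_le_div₀ (Real.exp_pos _).le hnum (sum_exp_pos L') hden
  have hexp : 1 - 2 * ε ≤ Real.exp (-(2 * ε)) := by linarith [Real.add_one_le_exp (-(2 * ε))]
  nlinarith [softmax_nonneg L y, softmax_le_one L y]

open InnerProductSpace in
lemma hasGradientAt_log_softmax_inner {E : Type*} [NormedAddCommGroup E] [InnerProductSpace ℝ E]
    [CompleteSpace E] (u : V → E) (y : V) (θ : E) :
    HasGradientAt (fun θ' => Real.log (softmax (fun w => ⟪u w, θ'⟫) y))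
      (u y - ∑ w, softmax (fun w => ⟪u w, θ⟫) w • u w) θ := by
  have hf : (fun θ' => Real.log (softmax (fun w => ⟪u w, θ'⟫) y))
      = fun θ' => ⟪u y, θ'⟫ - Real.log (∑ w, Real.exp ⟪u w, θ'⟫) := by
    funext θ'
    rw [softmax, Real.log_div (Real.exp_ne_zero _) (sum_exp_pos _).ne', Real.log_exp]
  have hinner : ∀ w, HasFDerivAt (fun θ' : E => ⟪u w, θ'⟫) (innerSL ℝ (u w)) θ :=
    fun w => (innerSL ℝ (u w)).hasFDerivAt
  have hZ := (HasFDerivAt.fun_sum fun w _ => (hinner w).exp).log (sum_exp_pos _).ne'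
  rw [hf, hasGradientAt_iff_hasFDerivAt]
  refine ((hinner y).sub hZ).congr_fderiv (ContinuousLinearMap.ext fun v => ?_)
  simp only [sub_apply, coe_innerSL_apply, smul_apply, sum_apply, smul_eq_mul, mul_comm, softmax,
    div_eq_mul_inv, map_sub, map_sum, map_smul, toDual_apply_apply, sub_right_inj]
  rw [Finset.mul_sum]
  exact Finset.sum_congr rfl fun _ _ => by ring

end Softmax

section Model

variable {V : Type*} [DecidableEq V] {P : Type*} [Fintype P] {J S Bsz : ℕ}
  (γ : ℝ) (σ : Fin J → List V → V) (h : Fin S → Fin J → EuclideanSpace ℝ P)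

def featureVec (s : Fin S) (x : List V) (v : V) : EuclideanSpace ℝ P :=
  ∑ j, (if σ j x = v then γ else 0) • h s j

lemma model_eq_inner (θ : EuclideanSpace ℝ P) (s : Fin S) (x : List V) :
    model γ σ h θ s x = fun v => ⟪featureVec γ σ h s x v, θ⟫ := by
  funext v
  simp only [model, featureVec, sum_inner, real_inner_smul_left]

lemma inner_featureVec (hh : Orthonormal ℝ fun sj : Fin S × Fin J => h sj.1 sj.2)
    (s s' : Fin S) (j : Fin J) (x : List V) (v : V) :
    ⟪h s j, featureVec γ σ h s' x v⟫ = if s' = s ∧ v = σ j x then γ else 0 := by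
  have horth : ∀ j', ⟪h s j, h s' j'⟫ = if (s', j') = (s, j) then (1 : ℝ) else 0 := fun j' =>
    (orthonormal_iff_ite.mp hh (s, j) (s', j')).trans (by simp only [eq_comm])
  simp only [featureVec, inner_sum, real_inner_smul_right, horth, Prod.mk.injEq]
  by_cases hs : s' = s <;> simp [hs, eq_comm]

lemma model_apply_task (hσ : ∀ j j' : Fin J, j ≠ j' → ∀ x : List V, σ j x ≠ σ j' x)
    (θ : EuclideanSpace ℝ P) (s : Fin S) (j : Fin J) (x : List V) :
    model γ σ h θ s x (σ j x) = γ * ⟪h s j, θ⟫ := by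
  rw [model, Finset.sum_eq_single j (fun j' _ hne => by rw [if_neg (hσ j' j hne x), zero_mul])
    (fun hj => absurd (Finset.mem_univ j) hj), if_pos rfl]

lemma model_apply_of_forall_ne {x : List V} {w : V} (hw : ∀ j, σ j x ≠ w)
    (θ : EuclideanSpace ℝ P) (s : Fin S) :
    model γ σ h θ s x w = 0 :=
  Finset.sum_eq_zero fun j _ => by rw [if_neg (hw j), zero_mul]

variable [Fintype V]

lemma sum_exp_model (hσ : ∀ j j' : Fin J, j ≠ j' → ∀ x : List V, σ j x ≠ σ j' x)
    (θ : EuclideanSpace ℝ P) (s : Fin S) (x : List V) :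
    ∑ w, Real.exp (model γ σ h θ s x w)
      = Fintype.card V + ∑ j, (Real.exp (γ * ⟪h s j, θ⟫) - 1) := by
  have hinj : Function.Injective (σ · x) := fun j j' hjj' =>
    by_contra fun hne => hσ j j' hne x hjj'
  have hoff : ∀ w ∉ Set.range (σ · x), Real.exp (model γ σ h θ s x w) - 1 = 0 := fun w hw => by
    rw [model_apply_of_forall_ne γ σ h (fun j hj => hw ⟨j, hj⟩), Real.exp_zero, sub_self]
  rw [Fintype.sum_of_injective _ hinj _ _ hoff fun j => by rw [model_apply_task γ σ h hσ],
    Finset.sum_sub_distrib]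
  simp

lemma policy_apply_task_eq (hσ : ∀ j j' : Fin J, j ≠ j' → ∀ x : List V, σ j x ≠ σ j' x)
    (θ : EuclideanSpace ℝ P) (s : Fin S) (j : Fin J) (x x' : List V) :
    policy γ σ h θ s x (σ j x) = policy γ σ h θ s x' (σ j x') := by
  simp only [policy, softmax, model_apply_task γ σ h hσ, sum_exp_model γ σ h hσ]

variable [Nonempty V]

lemma Pr_Av_of_forall_policy_eq (D : List V → ℝ) (hD0 : ∀ x, 0 ≤ D x)
    (hD1 : ∑' x : List V, D x = 1) {θ : EuclideanSpace ℝ P} {s : Fin S} {j : Fin J} {p : ℝ}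
    (hp : ∀ x, policy γ σ h θ s x (σ j x) = p) :
    Pr D γ σ h θ (Av σ s j) = p := by
  -- `∏ K` along a trajectory is its density restricted to `A_{s,j}`
  let K : Fin S → List V → V → ℝ := fun i x v =>
    if i = s then (if v = σ j x then policy γ σ h θ i x v else 0) else policy γ σ h θ i x v
  have hind : (Av σ s j).indicator (dens D γ σ h θ)
      = fun ω => D ω.1 * ∏ i, K i (pref ω i) (ω.2 i) := by
    funext ω
    by_cases hω : ω.2 s = σ j (pref ω s)
    · rw [Set.indicator_of_mem (show ω ∈ Av σ s j from hω), dens]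
      refine congrArg _ (Finset.prod_congr rfl fun i _ => ?_)
      by_cases hi : i = s
      · subst hi; simp [K, hω]
      · simp [K, hi]
    · rw [Set.indicator_of_notMem (show ω ∉ Av σ s j from hω),
        Finset.prod_eq_zero (Finset.mem_univ s) (by simp [K, hω]), mul_zero]
  have hK : ∀ i x, ∑ v, K i x v = if i = s then p else 1 := by
    intro i x
    by_cases hi : i = s
    · subst hi; simp [K, hp]
    · simp only [K, hi, if_false]; exact sum_softmax _
  rw [Pr, hind]
  refine tsum_mul_of_sum_fiber_eq hD0 hD1 (fun ω => Finset.prod_nonneg fun i _ => ?_) fun x₀ => ?_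
  · simp only [K]; split_ifs <;> first | exact softmax_nonneg _ _ | exact le_rfl
  · exact (sum_prod_autoregressive K _ hK x₀).trans (by simp)

lemma inner_gradient_log_policy (hh : Orthonormal ℝ fun sj : Fin S × Fin J => h sj.1 sj.2)
    (θ : EuclideanSpace ℝ P) (s s' : Fin S) (j : Fin J) (x : List V) (y : V) :
    ⟪h s j, gradient (fun θ' => Real.log (policy γ σ h θ' s' x y)) θ⟫
      = if s' = s then γ * ((if y = σ j x then 1 else 0) - policy γ σ h θ s' x (σ j x))
        else 0 := by
  simp only [policy, model_eq_inner]
  rw [(hasGradientAt_log_softmax_inner _ y θ).gradient, inner_sub_right, inner_sum]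
  simp only [real_inner_smul_right, inner_featureVec γ σ h hh]
  by_cases hs : s' = s
  · simp only [hs, true_and, if_true, mul_ite, mul_zero, Finset.sum_ite_eq', Finset.mem_univ]
    split_ifs <;> ring
  · simp [hs]

lemma inner_update (hh : Orthonormal ℝ fun sj : Fin S × Fin J => h sj.1 sj.2) (η : ℝ)
    (θ : EuclideanSpace ℝ P) (bs : Fin Bsz → Traj V S) (s : Fin S) (j : Fin J) :
    ⟪h s j, update γ σ h η θ bs⟫ = ⟪h s j, θ⟫ + η * γ * Q γ σ h θ bs s j := by
  simp only [update, Q, inner_add_right, real_inner_smul_right, inner_sum,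
    inner_gradient_log_policy γ σ h hh, Finset.sum_ite_eq', Finset.mem_univ, if_true,
    ← Finset.mul_sum]
  ring

lemma abs_Q_le_one (θ : EuclideanSpace ℝ P) (bs : Fin Bsz → Traj V S) (s : Fin S) (j : Fin J) :
    |Q γ σ h θ bs s j| ≤ 1 := by
  have hterm : ∀ b, |(if (bs b).2 s = σ j (pref (bs b) s.val) then (1 : ℝ) else 0)
      - policy γ σ h θ s (pref (bs b) s.val) (σ j (pref (bs b) s.val))| ≤ 1 := fun b =>
    abs_sub_le_of_nonneg_of_le (by split_ifs <;> norm_num) (by split_ifs <;> norm_num)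
      (softmax_nonneg _ _) (softmax_le_one _ _)
  rw [Q, abs_mul, abs_of_nonneg (by positivity)]
  calc 1 / (Bsz : ℝ) * |∑ b, _| ≤ 1 / (Bsz : ℝ) * Bsz := by
        gcongr
        exact (Finset.abs_sum_le_sum_abs _ _).trans (by
          simpa using Finset.sum_le_sum (s := Finset.univ) fun b _ => hterm b)
    _ ≤ 1 := by
        rcases Nat.eq_zero_or_pos Bsz with hB | hB
        · simp [hB]
        · rw [one_div_mul_cancel (by positivity)]

lemma abs_model_update_sub_le (hσ : ∀ j j' : Fin J, j ≠ j' → ∀ x : List V, σ j x ≠ σ j' x)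
    (hh : Orthonormal ℝ fun sj : Fin S × Fin J => h sj.1 sj.2)
    {η : ℝ} (hη : 0 ≤ η) (θ : EuclideanSpace ℝ P) (bs : Fin Bsz → Traj V S) (s : Fin S)
    (x : List V) (w : V) :
    |model γ σ h (update γ σ h η θ bs) s x w - model γ σ h θ s x w| ≤ η * γ ^ 2 := by
  by_cases hw : ∃ j, σ j x = w
  · obtain ⟨j, rfl⟩ := hw
    rw [model_apply_task γ σ h hσ, model_apply_task γ σ h hσ, inner_update γ σ h hh,
      show γ * (⟪h s j, θ⟫ + η * γ * Q γ σ h θ bs s j) - γ * ⟪h s j, θ⟫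
        = η * γ ^ 2 * Q γ σ h θ bs s j by ring,
      abs_mul, abs_of_nonneg (by positivity)]
    exact mul_le_of_le_one_right (by positivity) (abs_Q_le_one γ σ h θ bs s j)
  · push Not at hw
    rw [model_apply_of_forall_ne γ σ h hw, model_apply_of_forall_ne γ σ h hw, sub_self, abs_zero]
    positivity

end Model

end RLVR

open RLVR in
theorem stmt16_general {V : Type*} [Fintype V] [DecidableEq V] [Nonempty V]
    {P : Type*} [Fintype P] {J S Bsz : ℕ}
    (γ η : ℝ) (hη : 0 < η)
    (σ : Fin J → List V → V)
    (hσ : ∀ j j' : Fin J, j ≠ j' → ∀ x : List V, σ j x ≠ σ j' x)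
    (h : Fin S → Fin J → EuclideanSpace ℝ P)
    (hh : Orthonormal ℝ fun sj : Fin S × Fin J => h sj.1 sj.2)
    (D : List V → ℝ) (hD0 : ∀ x, 0 ≤ D x) (hD1 : ∑' x : List V, D x = 1)
    (τ : Fin S → Fin J)
    (θ0 : EuclideanSpace ℝ P) :
    ∀ (ω : ℕ → Fin Bsz → Traj V S) (t : ℕ) (s : Fin S),
      Pr D γ σ h (thetaSeq γ σ h η θ0 ω (t + 1)) (Av σ s (τ s))
        ≥ Pr D γ σ h (thetaSeq γ σ h η θ0 ω t) (Av σ s (τ s)) - 2 * η * γ ^ 2 := by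
  intro ω t s
  have hPr : ∀ θ, Pr D γ σ h θ (Av σ s (τ s)) = policy γ σ h θ s [] (σ (τ s) []) := fun θ =>
    Pr_Av_of_forall_policy_eq γ σ h D hD0 hD1 fun x => policy_apply_task_eq γ σ h hσ θ s _ x []
  have hstep := softmax_sub_two_mul_le
    (abs_model_update_sub_le γ σ h hσ hh hη.le (thetaSeq γ σ h η θ0 ω t) (ω t) s []) (σ (τ s) [])
  rw [hPr, hPr, ge_iff_le, mul_assoc]
  exact hstep

open RLVR in
/-- Lemma A.10 of the paper. If `η < 1/(4γ²)` then, surely (for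
every realization `ω` of the training batches) and at every iteration `t` and step
`s`, a single gradient step cannot decrease the probability of selecting the correct
task by more than `2ηγ²`:
`P_{t+1}(A_{s,τ(s)}) ≥ P_t(A_{s,τ(s)}) − 2ηγ²`. -/
theorem stmt16 {V : Type*} [Fintype V] [DecidableEq V] [Nonempty V]
    {P : Type*} [Fintype P] {J S Bsz : ℕ}
    (hS : 0 < S) (hJ : 0 < J) (hBsz : 0 < Bsz)
    (γ η : ℝ) (hγ : 0 < γ) (hη : 0 < η) (hηsmall : η < 1 / (4 * γ ^ 2))
    (σ : Fin J → List V → V)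
    (hσ : ∀ j j' : Fin J, j ≠ j' → ∀ x : List V, σ j x ≠ σ j' x)
    (h : Fin S → Fin J → EuclideanSpace ℝ P)
    (hh : Orthonormal ℝ fun sj : Fin S × Fin J => h sj.1 sj.2)
    (D : List V → ℝ) (hD0 : ∀ x, 0 ≤ D x) (hD1 : ∑' x : List V, D x = 1)
    (Verif : List V → Bool) (τ : Fin S → Fin J)
    (hA1 : ∀ x0 : List V, 0 < D x0 → Verif (fstar σ τ x0) = true)
    (θ0 : EuclideanSpace ℝ P) :
    ∀ (ω : ℕ → Fin Bsz → Traj V S) (t : ℕ) (s : Fin S),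
      Pr D γ σ h (thetaSeq γ σ h η θ0 ω (t + 1)) (Av σ s (τ s))
        ≥ Pr D γ σ h (thetaSeq γ σ h η θ0 ω t) (Av σ s (τ s)) - 2 * η * γ ^ 2 :=
  stmt16_general γ η hη σ hσ h hh D hD0 hD1 τ θ0
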